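/- arXiv:2009.02001 — 2 statements merged into one kernel-verified Lean document; each statement's English description precedes it below -/
import Mathlib

section
/- For all graphs G and H, the walk-nonrepetitive chromatic number of the strong product satisfies σ(G ⊠ H) ≤ σ(G) · σ(H). -/
/-- The strong product `G ⊠ H`. -/
def StrongProd {V W : Type*} (G : SimpleGraph V) (H : SimpleGraph W) :
    SimpleGraph (V × W) where
  Adj p q := p ≠ q ∧ (p.1 = q.1 ∨ G.Adj p.1 q.1) ∧ (p.2 = q.2 ∨ H.Adj p.2 q.2)
  symm := by
    constructor
    rintro p q ⟨hne, h1, h2⟩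
    exact ⟨hne.symm, h1.imp Eq.symm SimpleGraph.Adj.symm,
      h2.imp Eq.symm SimpleGraph.Adj.symm⟩
  loopless := by constructor; rintro p ⟨hne, -, -⟩; exact hne rfl

/-- `v 0, …, v (n-1)` is a walk in `G`. -/
def IsWalkSeq {V : Type*} (G : SimpleGraph V) (n : ℕ) (v : ℕ → V) : Prop :=
  ∀ i, i + 1 < n → G.Adj (v i) (v (i + 1))

/-- A colouring is walk-nonrepetitive if every repetitively coloured walk is boring. -/
def WalkNonrepetitive {V C : Type*} (G : SimpleGraph V) (φ : V → C) : Prop :=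
  ∀ t : ℕ, 0 < t → ∀ v : ℕ → V, IsWalkSeq G (2 * t) v →
    (∀ i < t, φ (v i) = φ (v (t + i))) → ∀ i < t, v i = v (t + i)

/-!
Colour `(v, w)` by `(φ v, ψ w)`. A walk in `G ⊠ H` projects to *lazy* walks in `G` and `H`
(consecutive vertices equal or adjacent), so it suffices that a walk-nonrepetitive colouring admits
no non-boring repetitively coloured lazy walk. Such a colouring is proper, so a stay
`v k = v (k + 1)` in the first half of a repetitively coloured lazy walk forces the corresponding
stay in the second half (unless `k` is the last index of the half, where the second half has
nothing to match). Erasing the `k`-th vertex of both halves leaves a shorter repetitively coloured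
lazy walk, which is boring by induction; the erased position is recovered because two lazy
neighbours of one vertex with the same colour coincide. A lazy walk without stays is a walk.
-/

section Erase

variable {α β : Type*}

def eraseAt (k : ℕ) (v : ℕ → α) (j : ℕ) : α := if j < k then v j else v (j + 1)

/-- Erases the `k`-th term of each half of a sequence with halves of length `t`. -/
def erasePair (t k : ℕ) (v : ℕ → α) : ℕ → α := eraseAt k (eraseAt (t + k) v)

variable {k j t : ℕ} {v : ℕ → α}

lemma eraseAt_of_lt (h : j < k) : eraseAt k v j = v j := if_pos h

lemma eraseAt_of_le (h : k ≤ j) : eraseAt k v j = v (j + 1) := if_neg (not_lt.2 h)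

lemma forall_lt_eraseAt {R : α → β → Prop} {x : ℕ → α} {y : ℕ → β}
    (h : ∀ i < t + 1, R (x i) (y i)) : ∀ j < t, R (eraseAt k x j) (eraseAt k y j) := by
  intro j hj
  unfold eraseAt
  split_ifs
  exacts [h j (by omega), h (j + 1) (by omega)]

lemma forall_lt_of_eraseAt {R : α → β → Prop} {x : ℕ → α} {y : ℕ → β} (hk : k ≤ t)
    (h : ∀ j < t, R (eraseAt k x j) (eraseAt k y j)) : ∀ i < t + 1, i ≠ k → R (x i) (y i) := by
  intro i hi hik
  rcases lt_or_gt_of_ne hik with hik | hik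
  · simpa only [eraseAt_of_lt hik] using h i (by omega)
  · obtain ⟨j, rfl⟩ := Nat.exists_eq_add_of_lt hik
    simpa only [eraseAt_of_le (Nat.le_add_right k j)] using h (k + j) (by omega)

lemma erasePair_apply_of_lt (hj : j < t) : erasePair (t + 1) k v j = eraseAt k v j := by
  simp only [erasePair, eraseAt]
  split_ifs <;> first | rfl | omega

lemma erasePair_apply_add (hk : k ≤ t) :
    erasePair (t + 1) k v (t + j) = eraseAt k (fun i => v (t + 1 + i)) j := by
  simp only [erasePair, eraseAt]
  split_ifs <;> first | omega | (congr 1; omega)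

end Erase

section Lazy

variable {V W C : Type*} {G : SimpleGraph V} {H : SimpleGraph W} {n k t : ℕ} {v : ℕ → V}

def IsLazyWalkSeq (G : SimpleGraph V) (n : ℕ) (v : ℕ → V) : Prop :=
  ∀ i, i + 1 < n → v i = v (i + 1) ∨ G.Adj (v i) (v (i + 1))

def LazyWalkNonrepetitive (G : SimpleGraph V) (φ : V → C) : Prop :=
  ∀ t : ℕ, ∀ v : ℕ → V, IsLazyWalkSeq G (2 * t) v →
    (∀ i < t, φ (v i) = φ (v (t + i))) → ∀ i < t, v i = v (t + i)

lemma IsWalkSeq.strongProd_fst {u : ℕ → V × W} (h : IsWalkSeq (StrongProd G H) n u) :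
    IsLazyWalkSeq G n fun i => (u i).1 :=
  fun i hi => (h i hi).2.1

lemma IsWalkSeq.strongProd_snd {u : ℕ → V × W} (h : IsWalkSeq (StrongProd G H) n u) :
    IsLazyWalkSeq H n fun i => (u i).2 :=
  fun i hi => (h i hi).2.2

lemma IsLazyWalkSeq.eraseAt (h : IsLazyWalkSeq G (n + 1) v) (hk : k < n → v k = v (k + 1)) :
    IsLazyWalkSeq G n (eraseAt k v) := by
  intro j hj
  rcases lt_trichotomy (j + 1) k with hjk | rfl | hjk
  · rw [eraseAt_of_lt (by omega), eraseAt_of_lt hjk]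
    exact h j (by omega)
  · rw [eraseAt_of_lt (by omega), eraseAt_of_le le_rfl, ← hk hj]
    exact h j (by omega)
  · rw [eraseAt_of_le (by omega), eraseAt_of_le (by omega)]
    exact h (j + 1) (by omega)

lemma IsLazyWalkSeq.erasePair (h : IsLazyWalkSeq G (2 * (t + 1)) v) (hk : v k = v (k + 1))
    (hk' : k < t → v (t + 1 + k) = v (t + 1 + k + 1)) :
    IsLazyWalkSeq G (2 * t) (erasePair (t + 1) k v) := by
  rw [show 2 * (t + 1) = 2 * t + 1 + 1 by ring] at h
  refine (h.eraseAt fun hlt => hk' (by omega)).eraseAt fun hlt => ?_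
  rwa [eraseAt_of_lt (by omega), eraseAt_of_lt (by omega)]

end Lazy

namespace WalkNonrepetitive

variable {V C : Type*} {G : SimpleGraph V} {φ : V → C} {t : ℕ} {v : ℕ → V}

lemma proper (h : WalkNonrepetitive G φ) {x y : V} (hxy : G.Adj x y) : φ x ≠ φ y := by
  intro hφ
  have hwalk : IsWalkSeq G 2 fun i => if i = 0 then x else y := fun i hi => by
    obtain rfl : i = 0 := by omega
    simpa using hxy
  have := h 1 one_pos _ hwalk (fun i hi => by
    obtain rfl : i = 0 := by omega
    simpa using hφ) 0 one_pos
  exact hxy.ne (by simpa using this)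

lemma eq_of_adj_of_adj (h : WalkNonrepetitive G φ) {c x y : V} (hx : G.Adj c x)
    (hy : G.Adj c y) (hφ : φ x = φ y) : x = y := by
  have hwalk : IsWalkSeq G 4 fun i => if i = 0 then x else if i = 2 then y else c :=
    fun i hi => by
      obtain rfl | rfl | rfl : i = 0 ∨ i = 1 ∨ i = 2 := by omega
      all_goals simp [hx.symm, hy, hy.symm]
  have := h 2 two_pos _ hwalk (fun i hi => by
    obtain rfl | rfl : i = 0 ∨ i = 1 := by omega
    all_goals simp [hφ]) 0 two_pos
  simpa using this

lemma eq_iff_of_lazyAdj (h : WalkNonrepetitive G φ) {x y : V} (hxy : x = y ∨ G.Adj x y) :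
    x = y ↔ φ x = φ y :=
  ⟨congrArg φ, fun hφ => hxy.resolve_right fun ha => h.proper ha hφ⟩

lemma eq_of_lazyAdj_of_lazyAdj (h : WalkNonrepetitive G φ) {c x y : V}
    (hx : c = x ∨ G.Adj c x) (hy : c = y ∨ G.Adj c y) (hφ : φ x = φ y) : x = y := by
  rcases hx with rfl | hx <;> rcases hy with rfl | hy
  · rfl
  · exact absurd hφ (h.proper hy)
  · exact absurd hφ.symm (h.proper hx)
  · exact h.eq_of_adj_of_adj hx hy hφ

section RepetitiveLazyWalk

variable (h : WalkNonrepetitive G φ) (hv : IsLazyWalkSeq G (2 * t) v)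
  (hrep : ∀ i < t, φ (v i) = φ (v (t + i)))
include h hv hrep

lemma stay_iff {i : ℕ} (hi : i + 1 < t) : v (t + i) = v (t + i + 1) ↔ v i = v (i + 1) := by
  rw [h.eq_iff_of_lazyAdj (hv (t + i) (by omega)), h.eq_iff_of_lazyAdj (hv i (by omega)),
    hrep i (by omega), hrep (i + 1) hi]
  rfl

lemma eq_add_succ_of_eq_add {i : ℕ} (hi : i + 1 < t) (he : v i = v (t + i)) :
    v (i + 1) = v (t + (i + 1)) :=
  h.eq_of_lazyAdj_of_lazyAdj (hv i (by omega)) (he ▸ hv (t + i) (by omega)) (hrep (i + 1) hi)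

lemma eq_add_of_eq_add_succ {i : ℕ} (hi : i + 1 < t) (he : v (i + 1) = v (t + (i + 1))) :
    v i = v (t + i) :=
  h.eq_of_lazyAdj_of_lazyAdj ((hv i (by omega)).imp Eq.symm SimpleGraph.Adj.symm)
    (he ▸ (hv (t + i) (by omega)).imp Eq.symm SimpleGraph.Adj.symm) (hrep i (by omega))

lemma isWalkSeq_of_forall_ne (hstay : ∀ k < t, v k ≠ v (k + 1)) : IsWalkSeq G (2 * t) v := by
  refine fun i hi => (hv i hi).resolve_left ?_
  rcases lt_or_ge i t with hit | hit
  · exact hstay i hit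
  · obtain ⟨j, rfl⟩ : ∃ j, i = t + j := ⟨i - t, by omega⟩
    exact fun hj => hstay j (by omega) ((h.stay_iff hv hrep (by omega)).1 hj)

end RepetitiveLazyWalk

theorem lazyWalkNonrepetitive (h : WalkNonrepetitive G φ) : LazyWalkNonrepetitive G φ := by
  intro t
  induction t with
  | zero => exact fun _ _ _ i hi => absurd hi i.not_lt_zero
  | succ t ih =>
  intro v hv hrep
  by_cases hstay : ∃ k < t + 1, v k = v (k + 1)
  swap
  · push Not at hstay
    exact h (t + 1) t.succ_pos v (h.isWalkSeq_of_forall_ne hv hrep hstay) hrep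
  obtain ⟨k, hk, hvk⟩ := hstay
  have hvk' : k < t → v (t + 1 + k) = v (t + 1 + k + 1) :=
    fun hkt => (h.stay_iff hv hrep (by omega)).2 hvk
  have hu := ih _ (hv.erasePair hvk hvk') fun j hj => by
    rw [erasePair_apply_of_lt hj, erasePair_apply_add (by omega)]
    exact forall_lt_eraseAt (R := fun a b => φ a = φ b) hrep j hj
  have hne : ∀ i < t + 1, i ≠ k → v i = v (t + 1 + i) :=
    forall_lt_of_eraseAt (y := fun i => v (t + 1 + i)) (by omega) fun j hj => by
      rw [← erasePair_apply_of_lt hj, ← erasePair_apply_add (by omega)]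
      exact hu j hj
  intro i hi
  obtain hik | rfl := ne_or_eq i k
  · exact hne i hi hik
  rcases i with _ | j
  · rcases t with _ | s
    · simpa using hvk
    · exact h.eq_add_of_eq_add_succ hv hrep (by omega) (hne 1 (by omega) (by omega))
  · exact h.eq_add_succ_of_eq_add hv hrep hi (hne j (by omega) (by omega))

lemma comp_injective {D : Type*} (h : WalkNonrepetitive G φ) {f : C → D} (hf : f.Injective) :
    WalkNonrepetitive G (f ∘ φ) :=
  fun t ht v hv hrep => h t ht v hv fun i hi => hf (hrep i hi)

theorem strongProd {W D : Type*} {H : SimpleGraph W} {ψ : W → D} (hφ : WalkNonrepetitive G φ)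
    (hψ : WalkNonrepetitive H ψ) :
    WalkNonrepetitive (StrongProd G H) fun p => (φ p.1, ψ p.2) := by
  intro t _ v hv hrep i hi
  have hrep₁ (j) (hj : j < t) := congrArg Prod.fst (hrep j hj)
  have hrep₂ (j) (hj : j < t) := congrArg Prod.snd (hrep j hj)
  exact Prod.ext (hφ.lazyWalkNonrepetitive t _ hv.strongProd_fst hrep₁ i hi)
    (hψ.lazyWalkNonrepetitive t _ hv.strongProd_snd hrep₂ i hi)

end WalkNonrepetitive

/-- `σ(G ⊠ H) ≤ σ(G) · σ(H)`: from walk-nonrepetitive colourings of `G` and `H`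
with `a` and `b` colours one obtains a walk-nonrepetitive colouring of `G ⊠ H`
with `a·b` colours. -/
theorem sigma_strongProd_le {V W : Type*} (G : SimpleGraph V) (H : SimpleGraph W)
    (a b : ℕ)
    (hG : ∃ φ : V → Fin a, WalkNonrepetitive G φ)
    (hH : ∃ ψ : W → Fin b, WalkNonrepetitive H ψ) :
    ∃ χ : V × W → Fin (a * b), WalkNonrepetitive (StrongProd G H) χ := by
  obtain ⟨φ, hφ⟩ := hG
  obtain ⟨ψ, hψ⟩ := hH
  exact ⟨_, (hφ.strongProd hψ).comp_injective finProdFinEquiv.injective⟩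
end

section
/- The edge colouring of K_{2^k} with vertex set Z_2^k that colours each edge vw by v+w is a nonrepetitive edge colouring with 2^k − 1 colours; consequently π'(K_{2^k}) = 2^k − 1. -/
/-- `v 0, …, v (n-1)` is a path in `G`. -/
def IsPathSeq {V : Type*} (G : SimpleGraph V) (n : ℕ) (v : ℕ → V) : Prop :=
  (∀ i, i + 1 < n → G.Adj (v i) (v (i + 1))) ∧
  (∀ i j, i < n → j < n → v i = v j → i = j)

/-- A nonrepetitive edge colouring: for every path on `2t+1` vertices, the sequence
of colours of its first `t` edges does not equal that of its last `t` edges. -/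
def NonrepetitiveEdgeColoring {V C : Type*} (G : SimpleGraph V) (c : V → V → C) : Prop :=
  ∀ t : ℕ, 0 < t → ∀ v : ℕ → V, IsPathSeq G (2 * t + 1) v →
    ∃ i < t, c (v i) (v (i + 1)) ≠ c (v (t + i)) (v (t + i + 1))

lemma charTwo_swap {k : ℕ} (a b c d : Fin k → ZMod 2) (h : a + b = c + d) :
    a + c = b + d := by
  have h2 : ∀ y : ZMod 2, y + y = 0 := by decide
  have hb : b + b = 0 := by ext i; simpa using h2 (b i)
  have hc : c + c = 0 := by ext i; simpa using h2 (c i)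
  linear_combination h + hc - hb

lemma ncard_ne_zero (k : ℕ) :
    Set.ncard {x : Fin k → ZMod 2 | x ≠ 0} = 2 ^ k - 1 := by
  have : {x : Fin k → ZMod 2 | x ≠ 0} = ({0} : Set (Fin k → ZMod 2))ᶜ := by
    ext x; simp
  rw [this, Set.ncard_eq_toFinset_card']
  simp [Set.toFinset_compl, Finset.card_compl, Fintype.card_fun]

/-- On the complete graph with vertex set `Z₂^k`, colouring each edge `vw` by `v + w`
is a nonrepetitive edge colouring using exactly `2^k - 1` colours (the nonzero group
elements); moreover every nonrepetitive edge colouring of this graph uses at least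
`2^k - 1` colours, so `π'(K_{2^k}) = 2^k - 1`. -/
theorem nonrepetitive_chromatic_index_complete_graph (k : ℕ) :
    NonrepetitiveEdgeColoring (⊤ : SimpleGraph (Fin k → ZMod 2))
      (fun v w => v + w) ∧
    Set.ncard {x : Fin k → ZMod 2 |
        ∃ u w : Fin k → ZMod 2, u ≠ w ∧ x = u + w} = 2 ^ k - 1 ∧
    ∀ (C : Type) (c : (Fin k → ZMod 2) → (Fin k → ZMod 2) → C),
      (∀ u w, c u w = c w u) →
      NonrepetitiveEdgeColoring (⊤ : SimpleGraph (Fin k → ZMod 2)) c →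
      2 ^ k - 1 ≤ Set.ncard {x : C | ∃ u w, u ≠ w ∧ x = c u w} := by
  have hself : ∀ x : Fin k → ZMod 2, x + x = 0 := by
    intro x; ext i; have h2 : ∀ y : ZMod 2, y + y = 0 := by decide
    simpa using h2 (x i)
  refine ⟨?_, ?_, ?_⟩
  · -- nonrepetitive
    intro t ht v hv
    by_contra hcon
    push_neg at hcon
    have key : ∀ i ≤ t, v 0 + v t = v i + v (t + i) := by
      intro i hi
      induction i with
      | zero => simp
      | succ n ih =>
        have hn : n < t := by omega
        have h1 := ih (le_of_lt hn)
        have h2 := hcon n hn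
        have h3 : v n + v (t + n) = v (n + 1) + v (t + n + 1) :=
          charTwo_swap _ _ _ _ h2
        rw [h1, h3]
        rfl
    have h4 := key t le_rfl
    have h5 : v 0 = v (2 * t) := by
      have h6 : v 0 + v t = v t + v (2 * t) := by
        rw [two_mul]; exact h4
      have h7 : v 0 + v t = v (2 * t) + v t := by rw [h6, add_comm]
      exact add_right_cancel h7
    have := hv.2 0 (2 * t) (by omega) (by omega) h5
    omega
  · -- cardinality of colour set
    have : {x : Fin k → ZMod 2 | ∃ u w : Fin k → ZMod 2, u ≠ w ∧ x = u + w}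
        = {x : Fin k → ZMod 2 | x ≠ 0} := by
      ext x
      constructor
      · rintro ⟨u, w, huw, rfl⟩
        intro h0
        have h3 : w = u := by
          have : u + (u + w) = u + 0 := by rw [h0]
          simpa [← add_assoc, hself u] using this
        exact huw h3.symm
      · intro hx
        exact ⟨0, x, fun h => hx h.symm, by simp⟩
    rw [this]; exact ncard_ne_zero k
  · -- lower bound
    intro C c hsym hnr
    set S := {x : C | ∃ u w, u ≠ w ∧ x = c u w} with hS
    have hSfin : S.Finite := by
      apply Set.Finite.subset (Set.finite_range (Function.uncurry c))
      rintro x ⟨u, w, _, rfl⟩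
      exact ⟨(u, w), rfl⟩
    have hinj : Set.InjOn (fun v => c 0 v) {x : Fin k → ZMod 2 | x ≠ 0} := by
      intro a ha b hb hab
      by_contra hne
      -- build the path a, 0, b
      set p : ℕ → (Fin k → ZMod 2) := fun n => if n = 0 then a else if n = 1 then 0 else b with hp
      have hpath : IsPathSeq (⊤ : SimpleGraph (Fin k → ZMod 2)) (2 * 1 + 1) p := by
        constructor
        · intro i hi
          have hi2 : i < 2 := by omega
          interval_cases i
          · show p 0 ≠ p 1
            exact ha
          · show p 1 ≠ p 2
            exact fun h => hb h.symm
        · intro i j hi hj hij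
          have hi3 : i < 3 := hi
          have hj3 : j < 3 := hj
          interval_cases i <;> interval_cases j <;>
            first
              | rfl
              | (exact absurd hij ha)
              | (exact absurd hij.symm ha)
              | (exact absurd hij hb)
              | (exact absurd hij.symm hb)
              | (exact absurd hij hne)
              | (exact absurd hij.symm hne)
      obtain ⟨i, hi, hne2⟩ := hnr 1 one_pos p hpath
      have : i = 0 := by omega
      subst this
      apply hne2
      show c a 0 = c 0 b
      rw [hsym a 0]
      simpa using hab
    have himg : (fun v => c 0 v) '' {x : Fin k → ZMod 2 | x ≠ 0} ⊆ S := by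
      rintro x ⟨v, hv, rfl⟩
      exact ⟨0, v, fun h => hv h.symm, rfl⟩
    calc 2 ^ k - 1 = Set.ncard {x : Fin k → ZMod 2 | x ≠ 0} := (ncard_ne_zero k).symm
      _ = Set.ncard ((fun v => c 0 v) '' {x : Fin k → ZMod 2 | x ≠ 0}) :=
          (Set.ncard_image_of_injOn hinj).symm
      _ ≤ Set.ncard S := Set.ncard_le_ncard himg hSfin
end
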